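/- If treatment assignment is unconfounded given covariates X (i.e., Y(t) ⟂ T | X for all t), and b(X) is a balancing score (i.e., X ⟂ T | b(X)), then treatment assignment is unconfounded given b(X): Y(t) ⟂ T | b(X) for all t. -/

import Mathlib

open scoped Classical

noncomputable def Pr {Ω : Type*} [Fintype Ω] (μ : Ω → ℝ) (A : Ω → Prop) : ℝ :=
  ∑ ω, if A ω then μ ω else 0

noncomputable def CondPr {Ω : Type*} [Fintype Ω] (μ : Ω → ℝ) (A B : Ω → Prop) : ℝ :=
  Pr μ (fun ω => A ω ∧ B ω) / Pr μ B

/-!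
Condition first on the fine variable `X` and then sum over the fibre `{x | b x = c}`.
On a fibre point `x`, unconfoundedness gives `P(Y, T, x) P(x) = P(Y, x) P(T, x)`, and the
balancing property gives `P(T, x) = P(x) P(T | c)`; cancelling `P(x)` yields
`P(Y, T, x) = P(Y, x) P(T | c)`, which sums to `P(Y, T | c) = P(Y | c) P(T | c)`.
Null fibre points contribute nothing since `μ ≥ 0`.
-/

open Finset

def CondIndep {Ω : Type*} [Fintype Ω] (μ : Ω → ℝ) (A B C : Ω → Prop) : Prop :=
  CondPr μ (fun ω => A ω ∧ B ω) C = CondPr μ A C * CondPr μ B C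

section

variable {Ω : Type*} [Fintype Ω] {μ : Ω → ℝ}

lemma Pr_nonneg (hμ : ∀ ω, 0 ≤ μ ω) (A : Ω → Prop) : 0 ≤ Pr μ A :=
  sum_nonneg fun ω _ => by split_ifs <;> simp [hμ ω]

lemma Pr_congr {A B : Ω → Prop} (h : ∀ ω, A ω ↔ B ω) : Pr μ A = Pr μ B :=
  congrArg (Pr μ) (funext fun ω => propext (h ω))

lemma Pr_mono (hμ : ∀ ω, 0 ≤ μ ω) {A B : Ω → Prop} (h : ∀ ω, A ω → B ω) :
    Pr μ A ≤ Pr μ B :=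
  sum_le_sum fun ω _ => by
    by_cases hA : A ω
    · simp [hA, h ω hA]
    · simp only [hA, if_false]
      split_ifs <;> simp [hμ ω]

lemma Pr_eq_zero_of_imp (hμ : ∀ ω, 0 ≤ μ ω) {A B : Ω → Prop} (hB : Pr μ B = 0)
    (h : ∀ ω, A ω → B ω) : Pr μ A = 0 :=
  le_antisymm (hB ▸ Pr_mono hμ h) (Pr_nonneg hμ A)

lemma Pr_and_comp_eq_sum_fiber {α β : Type*} [Fintype α] (f : Ω → α) (g : α → β)
    (A : Ω → Prop) (c : β) :
    Pr μ (fun ω => A ω ∧ g (f ω) = c)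
      = ∑ x ∈ univ.filter (fun x => g x = c), Pr μ (fun ω => A ω ∧ f ω = x) := by
  unfold Pr
  rw [sum_comm]
  refine sum_congr rfl fun ω _ => ?_
  by_cases hA : A ω <;> simp [hA]

lemma condIndep_iff_mul_eq {A B C : Ω → Prop} (hC : Pr μ C ≠ 0) :
    CondIndep μ A B C ↔ Pr μ (fun ω => (A ω ∧ B ω) ∧ C ω) * Pr μ C
      = Pr μ (fun ω => A ω ∧ C ω) * Pr μ (fun ω => B ω ∧ C ω) := by
  unfold CondIndep CondPr
  rw [div_mul_div_comm, div_eq_div_iff hC (mul_ne_zero hC hC), ← mul_assoc,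
    mul_left_inj' hC]

/-- The contribution of one fibre point `E = {X = x}` inside `C = {b(X) = c}`. -/
lemma Pr_and_and_mul_eq_of_imp (hμ : ∀ ω, 0 ≤ μ ω) {A B E C : Ω → Prop}
    (hEC : ∀ ω, E ω → C ω)
    (hABE : 0 < Pr μ E → Pr μ (fun ω => (A ω ∧ B ω) ∧ E ω) * Pr μ E
      = Pr μ (fun ω => A ω ∧ E ω) * Pr μ (fun ω => B ω ∧ E ω))
    (hEBC : Pr μ (fun ω => (E ω ∧ B ω) ∧ C ω) * Pr μ C
      = Pr μ (fun ω => E ω ∧ C ω) * Pr μ (fun ω => B ω ∧ C ω)) :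
    Pr μ (fun ω => (A ω ∧ B ω) ∧ E ω) * Pr μ C
      = Pr μ (fun ω => A ω ∧ E ω) * Pr μ (fun ω => B ω ∧ C ω) := by
  rcases (Pr_nonneg hμ E).eq_or_lt with hE | hE
  · rw [Pr_eq_zero_of_imp (A := fun ω => (A ω ∧ B ω) ∧ E ω) hμ hE.symm fun _ h => h.2,
      Pr_eq_zero_of_imp (A := fun ω => A ω ∧ E ω) hμ hE.symm fun _ h => h.2,
      zero_mul, zero_mul]
  · have hEB : Pr μ (fun ω => (E ω ∧ B ω) ∧ C ω) = Pr μ (fun ω => B ω ∧ E ω) :=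
      Pr_congr fun ω =>
        ⟨fun h => ⟨h.1.2, h.1.1⟩, fun h => ⟨⟨h.2, h.1⟩, hEC ω h.2⟩⟩
    have hE' : Pr μ (fun ω => E ω ∧ C ω) = Pr μ E :=
      Pr_congr fun ω => ⟨And.left, fun h => ⟨h, hEC ω h⟩⟩
    rw [hEB, hE'] at hEBC
    refine mul_right_cancel₀ hE.ne' ?_
    linear_combination Pr μ C * hABE hE + Pr μ (fun ω => A ω ∧ E ω) * hEBC

theorem condIndep_comp_of_condIndep (hμ : ∀ ω, 0 ≤ μ ω) {α β : Type*} [Fintype α]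
    {f : Ω → α} {g : α → β} {A B : Ω → Prop} {c : β}
    (hA : ∀ x, 0 < Pr μ (fun ω => f ω = x) → CondIndep μ A B (fun ω => f ω = x))
    (hf : ∀ x, CondIndep μ (fun ω => f ω = x) B (fun ω => g (f ω) = c))
    (hc : 0 < Pr μ (fun ω => g (f ω) = c)) :
    CondIndep μ A B (fun ω => g (f ω) = c) := by
  rw [condIndep_iff_mul_eq hc.ne', Pr_and_comp_eq_sum_fiber f g, Pr_and_comp_eq_sum_fiber f g,
    sum_mul, sum_mul]
  refine sum_congr rfl fun x hx => ?_
  have hgx : g x = c := (mem_filter.1 hx).2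
  exact Pr_and_and_mul_eq_of_imp hμ (fun ω h => h ▸ hgx)
    (fun hpos => (condIndep_iff_mul_eq hpos.ne').1 (hA x hpos))
    ((condIndep_iff_mul_eq hc.ne').1 (hf x))

end

theorem stmt_2_general {Ω 𝒳 ℬ : Type*} [Fintype Ω] [Fintype 𝒳] {k : ℕ}
    (μ : Ω → ℝ) (hμ : ∀ ω, 0 ≤ μ ω)
    (X : Ω → 𝒳) (T : Ω → Fin k) (Y : Fin k → Ω → ℝ) (b : 𝒳 → ℬ)
    -- Unconfoundedness given X: Y(t) ⟂ T | X for all t.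
    (hU : ∀ (t' t : Fin k) (y : ℝ) (x : 𝒳), 0 < Pr μ (fun ω => X ω = x) →
      CondPr μ (fun ω => Y t' ω = y ∧ T ω = t) (fun ω => X ω = x)
        = CondPr μ (fun ω => Y t' ω = y) (fun ω => X ω = x)
          * CondPr μ (fun ω => T ω = t) (fun ω => X ω = x))
    -- b(X) is a balancing score: X ⟂ T | b(X).
    (hB : ∀ (x : 𝒳) (t : Fin k) (c : ℬ), 0 < Pr μ (fun ω => b (X ω) = c) →
      CondPr μ (fun ω => X ω = x ∧ T ω = t) (fun ω => b (X ω) = c)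
        = CondPr μ (fun ω => X ω = x) (fun ω => b (X ω) = c)
          * CondPr μ (fun ω => T ω = t) (fun ω => b (X ω) = c)) :
    -- Unconfoundedness given b(X): Y(t) ⟂ T | b(X) for all t.
    ∀ (t' t : Fin k) (y : ℝ) (c : ℬ), 0 < Pr μ (fun ω => b (X ω) = c) →
      CondPr μ (fun ω => Y t' ω = y ∧ T ω = t) (fun ω => b (X ω) = c)
        = CondPr μ (fun ω => Y t' ω = y) (fun ω => b (X ω) = c)
          * CondPr μ (fun ω => T ω = t) (fun ω => b (X ω) = c) :=
  fun t' t y c hc =>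
    condIndep_comp_of_condIndep hμ (hU t' t y) (fun x => hB x t c hc) hc

theorem stmt_2 {Ω 𝒳 ℬ : Type*} [Fintype Ω] [Fintype 𝒳] [Fintype ℬ] {k : ℕ}
    (μ : Ω → ℝ) (hμ : ∀ ω, 0 ≤ μ ω) (hμ1 : ∑ ω, μ ω = 1)
    (X : Ω → 𝒳) (T : Ω → Fin k) (Y : Fin k → Ω → ℝ) (b : 𝒳 → ℬ)
    -- Unconfoundedness given X: Y(t) ⟂ T | X for all t.
    (hU : ∀ (t' t : Fin k) (y : ℝ) (x : 𝒳), 0 < Pr μ (fun ω => X ω = x) →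
      CondPr μ (fun ω => Y t' ω = y ∧ T ω = t) (fun ω => X ω = x)
        = CondPr μ (fun ω => Y t' ω = y) (fun ω => X ω = x)
          * CondPr μ (fun ω => T ω = t) (fun ω => X ω = x))
    -- b(X) is a balancing score: X ⟂ T | b(X).
    (hB : ∀ (x : 𝒳) (t : Fin k) (c : ℬ), 0 < Pr μ (fun ω => b (X ω) = c) →
      CondPr μ (fun ω => X ω = x ∧ T ω = t) (fun ω => b (X ω) = c)
        = CondPr μ (fun ω => X ω = x) (fun ω => b (X ω) = c)
          * CondPr μ (fun ω => T ω = t) (fun ω => b (X ω) = c)) :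
    -- Unconfoundedness given b(X): Y(t) ⟂ T | b(X) for all t.
    ∀ (t' t : Fin k) (y : ℝ) (c : ℬ), 0 < Pr μ (fun ω => b (X ω) = c) →
      CondPr μ (fun ω => Y t' ω = y ∧ T ω = t) (fun ω => b (X ω) = c)
        = CondPr μ (fun ω => Y t' ω = y) (fun ω => b (X ω) = c)
          * CondPr μ (fun ω => T ω = t) (fun ω => b (X ω) = c) :=
  stmt_2_general μ hμ X T Y b hU hB
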